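/- arXiv:1806.04842 — 2 statements merged into one kernel-verified Lean document; each statement's English description precedes it below -/
import Mathlib

section
/- A priori L² error propagation estimate (core of Theorem 3.3): Assume the smallness condition 16σ²K₁²T < ν₀². Then there exist Δt₀ > 0 and C > 0, depending only on T, ν₀, σ, K₁, c₀ and c₁, such that the following holds whenever Δt ≤ Δt₀ and NΔt = T. Let δ ≥ 0 and let (θ^n)_{n=0}^N be a sequence in H with θ^0 = 0 such that for every 1 ≤ n ≤ N the functional v ↦ ((θ^n − θ^{n−1})/Δt, v) + A(θ^n, v) is bounded in absolute value by [c₀Δt + σK₁Δt Σ_{i=1}^n ‖θ^i‖₁ + c₁K₁Δt Σ_{i=1}^n (δ + ‖θ^i‖)] ‖v‖₁ + c₀(Δt + δ) ‖v‖ for every v ∈ H. Then for every 1 ≤ n ≤ N: ‖θ^n‖ + ‖θ^n − θ^{n−1}‖ + √(ν₀Δt) ‖θ^n‖₁ ≤ C (δ + Δt). -/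
/-!
Testing the scheme with `v = θⁿ` and using `2 ⟪a - b, a⟫ = ‖a‖² - ‖b‖² + ‖a - b‖²` together with
coercivity gives a one-step energy inequality. Young's inequality absorbs the `‖·‖₁`-part of the
forcing into the dissipation `ν₀ Δt ‖θⁿ‖₁²`; by Cauchy–Schwarz and `n Δt ≤ T`, what remains is
`O((δ + Δt)²)` plus `Δt` times the accumulated energy
`wₙ = ‖θⁿ‖² + ∑_{i ≤ n} (‖θⁱ - θⁱ⁻¹‖² + ν₀ Δt ‖θⁱ‖₁²)`, the memory terms being controlled by its
dissipation and `L²` parts. Summing over the steps yields the implicit discrete Gronwall inequality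
`wₘ ≤ T D + L Δt ∑_{k ≤ m} w_k`, which for `L Δt ≤ 1/2` gives `wₙ ≤ 2 T D e^{2 L T}`.
Each of the three quantities in the estimate is at most `√wₙ`.
-/

open scoped BigOperators RealInnerProductSpace

open Finset

theorem two_mul_le_mul_sq_add_sq_div {ν b e : ℝ} (hν : 0 < ν) :
    2 * b * e ≤ ν * e ^ 2 + b ^ 2 / ν := by
  have h : 0 ≤ (ν * e - b) ^ 2 / ν := by positivity
  have eq : (ν * e - b) ^ 2 / ν = ν * e ^ 2 + b ^ 2 / ν - 2 * b * e := by
    field_simp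
    ring
  linarith

theorem sq_mul_sum_le {ι : Type*} (s : Finset ι) (f : ι → ℝ) {Δt T : ℝ} (hΔt : 0 ≤ Δt)
    (hs : #s * Δt ≤ T) : (Δt * ∑ i ∈ s, f i) ^ 2 ≤ T * Δt * ∑ i ∈ s, f i ^ 2 := by
  have hsq : 0 ≤ ∑ i ∈ s, f i ^ 2 := sum_nonneg fun i _ => sq_nonneg (f i)
  calc (Δt * ∑ i ∈ s, f i) ^ 2 = Δt ^ 2 * (∑ i ∈ s, f i) ^ 2 := by ring
    _ ≤ Δt ^ 2 * (#s * ∑ i ∈ s, f i ^ 2) := by gcongr; exact sq_sum_le_card_mul_sum_sq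
    _ = (#s * Δt) * (Δt * ∑ i ∈ s, f i ^ 2) := by ring
    _ ≤ T * (Δt * ∑ i ∈ s, f i ^ 2) := by gcongr
    _ = T * Δt * ∑ i ∈ s, f i ^ 2 := by ring

theorem forcing_sq_le {c₀ σ K₁ c₁ Δt T δ : ℝ} {k : ℕ} (e a : ℕ → ℝ) (hΔt : 0 ≤ Δt)
    (hkT : k * Δt ≤ T) :
    (c₀ * Δt + σ * K₁ * Δt * ∑ i ∈ Icc 1 k, e i + c₁ * K₁ * Δt * ∑ i ∈ Icc 1 k, (δ + a i)) ^ 2 ≤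
      3 * c₀ ^ 2 * Δt ^ 2 + 3 * σ ^ 2 * K₁ ^ 2 * T * Δt * ∑ i ∈ Icc 1 k, e i ^ 2
        + 6 * c₁ ^ 2 * K₁ ^ 2 * T * (T * δ ^ 2 + Δt * ∑ i ∈ Icc 1 k, a i ^ 2) := by
  have hcard : (#(Icc 1 k) : ℝ) = k := by simp
  have hT : 0 ≤ T := le_trans (by positivity) hkT
  have he := sq_mul_sum_le (Icc 1 k) e (T := T) hΔt (by rwa [hcard])
  have ha := sq_mul_sum_le (Icc 1 k) (fun i => δ + a i) (T := T) hΔt (by rwa [hcard])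
  have hδa : ∑ i ∈ Icc 1 k, (δ + a i) ^ 2 ≤ 2 * k * δ ^ 2 + 2 * ∑ i ∈ Icc 1 k, a i ^ 2 := by
    calc ∑ i ∈ Icc 1 k, (δ + a i) ^ 2 ≤ ∑ i ∈ Icc 1 k, (2 * δ ^ 2 + 2 * a i ^ 2) :=
          sum_le_sum fun i _ => by linarith [sq_nonneg (δ - a i)]
      _ = 2 * k * δ ^ 2 + 2 * ∑ i ∈ Icc 1 k, a i ^ 2 := by
          rw [sum_add_distrib, sum_const, nsmul_eq_mul, hcard, ← mul_sum]; ring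
  have hδ : T * Δt * (2 * k * δ ^ 2) ≤ 2 * T * T * δ ^ 2 := by
    have := mul_le_mul_of_nonneg_left hkT (by positivity : 0 ≤ 2 * T * δ ^ 2)
    linarith
  set p := Δt * ∑ i ∈ Icc 1 k, e i
  set q := Δt * ∑ i ∈ Icc 1 k, (δ + a i)
  calc (c₀ * Δt + σ * K₁ * Δt * ∑ i ∈ Icc 1 k, e i + c₁ * K₁ * Δt * ∑ i ∈ Icc 1 k, (δ + a i)) ^ 2
      = (c₀ * Δt + σ * K₁ * p + c₁ * K₁ * q) ^ 2 := by ring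
    _ ≤ 3 * (c₀ * Δt) ^ 2 + 3 * (σ * K₁) ^ 2 * p ^ 2 + 3 * (c₁ * K₁) ^ 2 * q ^ 2 := by
        linarith [sq_nonneg (c₀ * Δt - σ * K₁ * p), sq_nonneg (c₀ * Δt - c₁ * K₁ * q),
          sq_nonneg (σ * K₁ * p - c₁ * K₁ * q)]
    _ ≤ 3 * (c₀ * Δt) ^ 2 + 3 * (σ * K₁) ^ 2 * (T * Δt * ∑ i ∈ Icc 1 k, e i ^ 2)
          + 3 * (c₁ * K₁) ^ 2 * (T * Δt * (2 * k * δ ^ 2 + 2 * ∑ i ∈ Icc 1 k, a i ^ 2)) := by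
        gcongr
        exact ha.trans (by gcongr)
    _ ≤ _ := by linarith [mul_le_mul_of_nonneg_left hδ (sq_nonneg (c₁ * K₁))]

theorem le_add_sum_of_sub_le {u f : ℕ → ℝ} {N : ℕ}
    (h : ∀ k, 1 ≤ k → k ≤ N → u k - u (k - 1) ≤ f k) :
    ∀ m ≤ N, u m ≤ u 0 + ∑ k ∈ Icc 1 m, f k := by
  intro m hm
  induction m with
  | zero => simp
  | succ m ih =>
    rw [sum_Icc_succ_top (by omega)]
    have := h (m + 1) (by omega) hm
    rw [Nat.add_sub_cancel] at this
    linarith [ih (by omega)]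

theorem discrete_gronwall_of_le_add_sum {v : ℕ → ℝ} {G ε : ℝ} {N : ℕ} (hG : 0 ≤ G)
    (hε : 0 ≤ ε) (hε' : ε ≤ 1 / 2) (hv : ∀ m, 0 ≤ v m)
    (h : ∀ m, 1 ≤ m → m ≤ N → v m ≤ G + ε * ∑ i ∈ Icc 1 m, v i) :
    ∀ m, 1 ≤ m → m ≤ N → v m ≤ 2 * G * Real.exp (2 * ε * m) := by
  set X : ℕ → ℝ := fun k => 2 * G + 2 * ε * ∑ i ∈ Icc 1 k, v i
  -- Absorbing the implicit term `ε * v (k + 1)` costs the factor `1 / (1 - ε) ≤ 2`.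
  have hvX : ∀ k, k + 1 ≤ N → v (k + 1) ≤ X k := by
    intro k hk
    have := h (k + 1) (by omega) hk
    rw [sum_Icc_succ_top (by omega)] at this
    linarith [mul_nonneg (by linarith : 0 ≤ 1 / 2 - ε) (hv (k + 1))]
  have hX : ∀ k ≤ N, X k ≤ 2 * G * (1 + 2 * ε) ^ k := by
    intro k hk
    induction k with
    | zero => simp [X]
    | succ k ih =>
      have hstep : X (k + 1) = X k + 2 * ε * v (k + 1) := by
        simp only [X, sum_Icc_succ_top (by omega : 1 ≤ k + 1)]
        ring
      have := mul_le_mul_of_nonneg_left (hvX k hk) (by positivity : 0 ≤ 2 * ε)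
      rw [hstep, pow_succ]
      linarith [mul_le_mul_of_nonneg_left (ih (by omega)) (by positivity : 0 ≤ 1 + 2 * ε)]
  intro m hm hmN
  obtain ⟨k, rfl⟩ : ∃ k, m = k + 1 := ⟨m - 1, by omega⟩
  have hpow : (1 + 2 * ε) ^ k ≤ Real.exp (2 * ε * (k + 1 : ℕ)) := by
    calc (1 + 2 * ε) ^ k ≤ Real.exp (2 * ε) ^ k := by
          gcongr
          linarith [Real.add_one_le_exp (2 * ε)]
      _ = Real.exp (k * (2 * ε)) := (Real.exp_nat_mul _ _).symm
      _ ≤ Real.exp (2 * ε * (k + 1 : ℕ)) := Real.exp_le_exp.2 (by push_cast; linarith)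
  calc v (k + 1) ≤ X k := hvX k hmN
    _ ≤ 2 * G * (1 + 2 * ε) ^ k := hX k (by omega)
    _ ≤ 2 * G * Real.exp (2 * ε * (k + 1 : ℕ)) := by gcongr

section EnergyInequality

variable {x r : ℕ → ℝ} {Δt T D α β : ℝ} {N : ℕ}

theorem energy_le_add_sum_of_step (hx0 : x 0 = 0) (hx : ∀ k, 0 ≤ x k) (hr : ∀ k, 0 ≤ r k)
    (hΔt : 0 ≤ Δt) (hNT : N * Δt ≤ T) (hD : 0 ≤ D) (hα : 0 ≤ α) (hβ : 0 ≤ β)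
    (hstep : ∀ k, 1 ≤ k → k ≤ N → x k - x (k - 1) + r k ≤
      Δt * (D + α * ∑ i ∈ Icc 1 k, r i + β * Δt * ∑ i ∈ Icc 1 k, x i + x k))
    {m : ℕ} (hmN : m ≤ N) :
    x m + ∑ i ∈ Icc 1 m, r i ≤
      T * D + (α + 1 + β * T) * Δt * ∑ k ∈ Icc 1 m, (x k + ∑ i ∈ Icc 1 k, r i) := by
  set w : ℕ → ℝ := fun k => x k + ∑ i ∈ Icc 1 k, r i
  set W := ∑ k ∈ Icc 1 m, w k
  have hrw : ∀ k, ∑ i ∈ Icc 1 k, r i ≤ w k := fun k => le_add_of_nonneg_left (hx k)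
  have hxw : ∀ k, x k ≤ w k := fun k => le_add_of_nonneg_right (sum_nonneg fun i _ => hr i)
  have hW : 0 ≤ W := sum_nonneg fun k _ => (hx k).trans (hxw k)
  have hmT : m * Δt ≤ T := le_trans (by gcongr) hNT
  have htel := le_add_sum_of_sub_le (u := w) (N := N)
    (f := fun k => Δt * (D + α * ∑ i ∈ Icc 1 k, r i + β * Δt * ∑ i ∈ Icc 1 k, x i + x k))
    (fun k hk hkN => by
      obtain ⟨j, rfl⟩ : ∃ j, k = j + 1 := ⟨k - 1, by omega⟩
      have := hstep (j + 1) hk hkN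
      simp only [w, sum_Icc_succ_top hk, Nat.add_sub_cancel] at this ⊢
      linarith) m hmN
  have hterm : ∀ k ∈ Icc 1 m,
      Δt * (D + α * ∑ i ∈ Icc 1 k, r i + β * Δt * ∑ i ∈ Icc 1 k, x i + x k) ≤
        Δt * D + (α + 1) * Δt * w k + β * Δt * Δt * W := by
    intro k hk
    have hX : ∑ i ∈ Icc 1 k, x i ≤ W :=
      (sum_le_sum fun i _ => hxw i).trans <| sum_le_sum_of_subset_of_nonneg
        (Icc_subset_Icc_right (mem_Icc.1 hk).2) fun i _ _ => (hx i).trans (hxw i)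
    calc Δt * (D + α * ∑ i ∈ Icc 1 k, r i + β * Δt * ∑ i ∈ Icc 1 k, x i + x k)
        ≤ Δt * (D + α * w k + β * Δt * W + w k) := by gcongr; exacts [hrw k, hxw k]
      _ = Δt * D + (α + 1) * Δt * w k + β * Δt * Δt * W := by ring
  have hsum_eq : ∑ k ∈ Icc 1 m, (Δt * D + (α + 1) * Δt * w k + β * Δt * Δt * W) =
      m * Δt * D + (α + 1) * Δt * W + m * Δt * (β * Δt * W) := by
    rw [sum_add_distrib, sum_add_distrib, sum_const, sum_const, ← mul_sum, Nat.card_Icc,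
      Nat.add_sub_cancel, nsmul_eq_mul, nsmul_eq_mul]
    ring
  have hsum_le := (sum_le_sum hterm).trans hsum_eq.le
  have hw0 : w 0 = 0 := by simp [w, hx0]
  have h₁ := mul_le_mul_of_nonneg_right hmT hD
  have h₂ := mul_le_mul_of_nonneg_right hmT (by positivity : 0 ≤ β * Δt * W)
  simp only [w] at htel hw0
  linarith

theorem energy_le_of_step (hx0 : x 0 = 0) (hx : ∀ k, 0 ≤ x k) (hr : ∀ k, 0 ≤ r k)
    (hΔt : 0 ≤ Δt) (hNT : N * Δt ≤ T) (hD : 0 ≤ D) (hα : 0 ≤ α) (hβ : 0 ≤ β)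
    (hΔt₀ : (α + 1 + β * T) * Δt ≤ 1 / 2)
    (hstep : ∀ k, 1 ≤ k → k ≤ N → x k - x (k - 1) + r k ≤
      Δt * (D + α * ∑ i ∈ Icc 1 k, r i + β * Δt * ∑ i ∈ Icc 1 k, x i + x k))
    {m : ℕ} (hm : 1 ≤ m) (hmN : m ≤ N) :
    x m + ∑ i ∈ Icc 1 m, r i ≤ 2 * (T * D) * Real.exp (2 * (α + 1 + β * T) * T) := by
  have hT : 0 ≤ T := le_trans (by positivity) hNT
  have hmT : m * Δt ≤ T := le_trans (by gcongr) hNT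
  refine (discrete_gronwall_of_le_add_sum (v := fun k => x k + ∑ i ∈ Icc 1 k, r i)
    (by positivity) (by positivity) hΔt₀ (fun k => add_nonneg (hx k) (sum_nonneg fun i _ => hr i))
    (fun k _ hk => energy_le_add_sum_of_step hx0 hx hr hΔt hNT hD hα hβ hstep hk) m hm hmN).trans ?_
  have hrate := mul_le_mul_of_nonneg_left hmT (by positivity : 0 ≤ 2 * (α + 1 + β * T))
  gcongr _ * Real.exp ?_
  linarith

end EnergyInequality

theorem le_sqrt_mul_of_sq_le {t K s : ℝ} (hs : 0 ≤ s) (h : t ^ 2 ≤ K * s ^ 2) : t ≤ √K * s :=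
  (le_abs_self t).trans <| (Real.abs_le_sqrt h).trans_eq <| by
    rw [Real.sqrt_mul' K (sq_nonneg s), Real.sqrt_sq hs]

theorem norm_add_norm_sub_add_le_of_energy_le {E : Type*} [SeminormedAddCommGroup E]
    {norm1 : E → ℝ} {θ : ℕ → E} {ν₀ Δt K s : ℝ} {n : ℕ} (hν₀Δt : 0 ≤ ν₀ * Δt) (hs : 0 ≤ s)
    (hn : 1 ≤ n)
    (h : ‖θ n‖ ^ 2 + ∑ i ∈ Icc 1 n, (‖θ i - θ (i - 1)‖ ^ 2 + ν₀ * Δt * norm1 (θ i) ^ 2) ≤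
      K * s ^ 2) :
    ‖θ n‖ + ‖θ n - θ (n - 1)‖ + √(ν₀ * Δt) * norm1 (θ n) ≤ 3 * √K * s := by
  have hr : ‖θ n - θ (n - 1)‖ ^ 2 + ν₀ * Δt * norm1 (θ n) ^ 2 ≤
      ∑ i ∈ Icc 1 n, (‖θ i - θ (i - 1)‖ ^ 2 + ν₀ * Δt * norm1 (θ i) ^ 2) :=
    single_le_sum (f := fun i => ‖θ i - θ (i - 1)‖ ^ 2 + ν₀ * Δt * norm1 (θ i) ^ 2)
      (fun i _ => by positivity) (mem_Icc.2 ⟨hn, le_rfl⟩)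
  have hsqrt : (√(ν₀ * Δt) * norm1 (θ n)) ^ 2 = ν₀ * Δt * norm1 (θ n) ^ 2 := by
    rw [mul_pow, Real.sq_sqrt hν₀Δt]
  have hsq₁ := sq_nonneg ‖θ n‖
  have hsq₂ := sq_nonneg ‖θ n - θ (n - 1)‖
  have hsq₃ : 0 ≤ ν₀ * Δt * norm1 (θ n) ^ 2 := by positivity
  have h₁ : ‖θ n‖ ≤ √K * s := le_sqrt_mul_of_sq_le hs (by linarith)
  have h₂ : ‖θ n - θ (n - 1)‖ ≤ √K * s := le_sqrt_mul_of_sq_le hs (by linarith)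
  have h₃ : √(ν₀ * Δt) * norm1 (θ n) ≤ √K * s := le_sqrt_mul_of_sq_le hs (by linarith)
  linarith

section ImplicitEuler

variable {H : Type*} [NormedAddCommGroup H] [InnerProductSpace ℝ H]

theorem two_mul_inner_sub_self (x y : H) :
    2 * ⟪x - y, x⟫ = ‖x‖ ^ 2 - ‖y‖ ^ 2 + ‖x - y‖ ^ 2 := by
  rw [norm_sub_sq_real, inner_sub_left, real_inner_self_eq_norm_sq, real_inner_comm]
  ring

theorem energy_step_le {norm1 : H → ℝ} {A : H →ₗ[ℝ] H →ₗ[ℝ] ℝ} {ν₀ Δt β γ : ℝ} {x y : H}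
    (hν₀ : 0 < ν₀) (hΔt : 0 < Δt) (hA : ν₀ * norm1 x ^ 2 ≤ A x x)
    (h : |⟪x - y, x⟫ / Δt + A x x| ≤ β * norm1 x + γ * ‖x‖) :
    ‖x‖ ^ 2 - ‖y‖ ^ 2 + (‖x - y‖ ^ 2 + ν₀ * Δt * norm1 x ^ 2) ≤
      Δt * (β ^ 2 / ν₀ + γ ^ 2 + ‖x‖ ^ 2) := by
  have hinner : ⟪x - y, x⟫ ≤ Δt * (β * norm1 x + γ * ‖x‖ - ν₀ * norm1 x ^ 2) := by
    rw [← div_le_iff₀' hΔt]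
    linarith [(le_abs_self _).trans h]
  have young : 2 * (β * norm1 x + γ * ‖x‖) ≤
      ν₀ * norm1 x ^ 2 + β ^ 2 / ν₀ + (γ ^ 2 + ‖x‖ ^ 2) := by
    linarith [two_mul_le_mul_sq_add_sq_div (b := β) (e := norm1 x) hν₀, two_mul_le_add_sq γ ‖x‖]
  linarith [two_mul_inner_sub_self x y, mul_le_mul_of_nonneg_left young hΔt.le]

theorem error_energy_step {norm1 : H → ℝ} {A : H →ₗ[ℝ] H →ₗ[ℝ] ℝ} {ν₀ σ K₁ c₀ c₁ T Δt δ : ℝ}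
    {θ : ℕ → H} {k : ℕ} (hν₀ : 0 < ν₀) (hΔt : 0 < Δt) (hδ : 0 ≤ δ) (hkT : k * Δt ≤ T)
    (hA : ν₀ * norm1 (θ k) ^ 2 ≤ A (θ k) (θ k))
    (h : |⟪θ k - θ (k - 1), θ k⟫ / Δt + A (θ k) (θ k)| ≤
      (c₀ * Δt + σ * K₁ * Δt * ∑ i ∈ Icc 1 k, norm1 (θ i)
        + c₁ * K₁ * Δt * ∑ i ∈ Icc 1 k, (δ + ‖θ i‖)) * norm1 (θ k) + c₀ * (Δt + δ) * ‖θ k‖) :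
    ‖θ k‖ ^ 2 - ‖θ (k - 1)‖ ^ 2 + (‖θ k - θ (k - 1)‖ ^ 2 + ν₀ * Δt * norm1 (θ k) ^ 2) ≤
      Δt * (((3 * c₀ ^ 2 + 6 * c₁ ^ 2 * K₁ ^ 2 * T ^ 2) / ν₀ + c₀ ^ 2) * (δ + Δt) ^ 2
        + 3 * σ ^ 2 * K₁ ^ 2 * T / ν₀ ^ 2 *
            ∑ i ∈ Icc 1 k, (‖θ i - θ (i - 1)‖ ^ 2 + ν₀ * Δt * norm1 (θ i) ^ 2)
        + 6 * c₁ ^ 2 * K₁ ^ 2 * T / ν₀ * Δt * ∑ i ∈ Icc 1 k, ‖θ i‖ ^ 2 + ‖θ k‖ ^ 2) := by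
  refine (energy_step_le hν₀ hΔt hA h).trans (mul_le_mul_of_nonneg_left ?_ hΔt.le)
  have hT : 0 ≤ T := le_trans (by positivity) hkT
  have hB := forcing_sq_le (c₀ := c₀) (σ := σ) (K₁ := K₁) (c₁ := c₁) (δ := δ)
    (fun i => norm1 (θ i)) (fun i => ‖θ i‖) hΔt.le hkT
  set S := ∑ i ∈ Icc 1 k, norm1 (θ i) ^ 2
  set X := ∑ i ∈ Icc 1 k, ‖θ i‖ ^ 2
  set B := c₀ * Δt + σ * K₁ * Δt * ∑ i ∈ Icc 1 k, norm1 (θ i)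
    + c₁ * K₁ * Δt * ∑ i ∈ Icc 1 k, (δ + ‖θ i‖)
  have hS : ν₀ * Δt * S ≤
      ∑ i ∈ Icc 1 k, (‖θ i - θ (i - 1)‖ ^ 2 + ν₀ * Δt * norm1 (θ i) ^ 2) := by
    rw [mul_sum]
    exact sum_le_sum fun i _ => le_add_of_nonneg_left (sq_nonneg _)
  have hD : (3 * c₀ ^ 2 * Δt ^ 2 + 6 * c₁ ^ 2 * K₁ ^ 2 * T ^ 2 * δ ^ 2) / ν₀ ≤
      (3 * c₀ ^ 2 + 6 * c₁ ^ 2 * K₁ ^ 2 * T ^ 2) / ν₀ * (δ + Δt) ^ 2 := by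
    have hΔt₂ : Δt ^ 2 ≤ (δ + Δt) ^ 2 := by gcongr; linarith
    have hδ₂ : δ ^ 2 ≤ (δ + Δt) ^ 2 := by gcongr; linarith
    rw [div_mul_eq_mul_div]
    gcongr
    linarith [mul_le_mul_of_nonneg_left hΔt₂ (by positivity : 0 ≤ 3 * c₀ ^ 2),
      mul_le_mul_of_nonneg_left hδ₂ (by positivity : 0 ≤ 6 * c₁ ^ 2 * K₁ ^ 2 * T ^ 2)]
  calc B ^ 2 / ν₀ + (c₀ * (Δt + δ)) ^ 2 + ‖θ k‖ ^ 2
      ≤ (3 * c₀ ^ 2 * Δt ^ 2 + 3 * σ ^ 2 * K₁ ^ 2 * T * Δt * S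
          + 6 * c₁ ^ 2 * K₁ ^ 2 * T * (T * δ ^ 2 + Δt * X)) / ν₀
          + c₀ ^ 2 * (δ + Δt) ^ 2 + ‖θ k‖ ^ 2 := by
        gcongr
        exact le_of_eq (by ring)
    _ = (3 * c₀ ^ 2 * Δt ^ 2 + 6 * c₁ ^ 2 * K₁ ^ 2 * T ^ 2 * δ ^ 2) / ν₀ + c₀ ^ 2 * (δ + Δt) ^ 2
          + 3 * σ ^ 2 * K₁ ^ 2 * T / ν₀ ^ 2 * (ν₀ * Δt * S)
          + 6 * c₁ ^ 2 * K₁ ^ 2 * T / ν₀ * Δt * X + ‖θ k‖ ^ 2 := by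
        field_simp
        ring
    _ ≤ _ := by
        linarith [mul_le_mul_of_nonneg_left hS
          (by positivity : 0 ≤ 3 * σ ^ 2 * K₁ ^ 2 * T / ν₀ ^ 2)]

end ImplicitEuler


theorem L2_error_propagation_general
    (T ν₀ σ K₁ c₀ c₁ : ℝ) (hT : 0 < T) (hν₀ : 0 < ν₀) :
    ∃ Δt₀ C : ℝ, 0 < Δt₀ ∧ 0 < C ∧
      ∀ (H : Type) [NormedAddCommGroup H] [InnerProductSpace ℝ H]
        (norm1 : H → ℝ), (∀ x, 0 ≤ norm1 x) →
      ∀ A : H →ₗ[ℝ] H →ₗ[ℝ] ℝ, (∀ v, ν₀ * (norm1 v) ^ 2 ≤ A v v) →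
      ∀ Δt : ℝ, 0 < Δt → Δt ≤ Δt₀ → ∀ N : ℕ, 1 ≤ N → (N : ℝ) * Δt = T →
      ∀ δ : ℝ, 0 ≤ δ →
      ∀ θ : ℕ → H, θ 0 = 0 →
        (∀ n, 1 ≤ n → n ≤ N → ∀ v : H,
          |⟪θ n - θ (n - 1), v⟫ / Δt + A (θ n) v| ≤
            (c₀ * Δt + σ * K₁ * Δt * ∑ i ∈ Finset.Icc 1 n, norm1 (θ i)
                + c₁ * K₁ * Δt * ∑ i ∈ Finset.Icc 1 n, (δ + ‖θ i‖)) * norm1 v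
              + c₀ * (Δt + δ) * ‖v‖) →
        ∀ n, 1 ≤ n → n ≤ N →
          ‖θ n‖ + ‖θ n - θ (n - 1)‖ + Real.sqrt (ν₀ * Δt) * norm1 (θ n) ≤
            C * (δ + Δt) := by
  set L := 3 * σ ^ 2 * K₁ ^ 2 * T / ν₀ ^ 2 + 1 + 6 * c₁ ^ 2 * K₁ ^ 2 * T / ν₀ * T
  set M := (3 * c₀ ^ 2 + 6 * c₁ ^ 2 * K₁ ^ 2 * T ^ 2) / ν₀ + c₀ ^ 2
  set K := 2 * T * M * Real.exp (2 * L * T)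
  refine ⟨1 / (2 * L), 3 * √K + 1, by positivity, by positivity, ?_⟩
  intro H _ _ norm1 _ A hA Δt hΔt hΔt₀ N _ hNT δ hδ θ hθ0 hθ n hn hnN
  have hLΔt : L * Δt ≤ 1 / 2 := by
    rw [le_div_iff₀ (by positivity)] at hΔt₀
    linarith
  have henergy := energy_le_of_step (x := fun k => ‖θ k‖ ^ 2)
    (r := fun k => ‖θ k - θ (k - 1)‖ ^ 2 + ν₀ * Δt * norm1 (θ k) ^ 2) (D := M * (δ + Δt) ^ 2)
    (by simp [hθ0]) (fun k => sq_nonneg _) (fun k => by positivity) hΔt.le hNT.le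
    (by positivity) (by positivity) (by positivity) hLΔt
    (fun k hk hkN => error_energy_step hν₀ hΔt hδ (by rw [← hNT]; gcongr) (hA _)
      (hθ k hk hkN (θ k))) hn hnN
  calc ‖θ n‖ + ‖θ n - θ (n - 1)‖ + √(ν₀ * Δt) * norm1 (θ n) ≤ 3 * √K * (δ + Δt) :=
        norm_add_norm_sub_add_le_of_energy_le (by positivity) (by positivity) hn
          (henergy.trans_eq (by ring))
    _ ≤ (3 * √K + 1) * (δ + Δt) := by gcongr; linarith

/-- A priori L² error propagation estimate (core of Theorem 3.3). -/
theorem L2_error_propagation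
    (T ν₀ σ K₁ c₀ c₁ : ℝ) (hT : 0 < T) (hν₀ : 0 < ν₀) (hσ : 0 < σ) (hK₁ : 0 < K₁)
    (hc₀ : 0 ≤ c₀) (hc₁ : 0 ≤ c₁)
    (hsmall : 16 * σ ^ 2 * K₁ ^ 2 * T < ν₀ ^ 2) :
    ∃ Δt₀ C : ℝ, 0 < Δt₀ ∧ 0 < C ∧
      ∀ (H : Type) [NormedAddCommGroup H] [InnerProductSpace ℝ H]
        (norm1 : H → ℝ), (∀ x, 0 ≤ norm1 x) →
      ∀ A : H →ₗ[ℝ] H →ₗ[ℝ] ℝ, (∀ v, ν₀ * (norm1 v) ^ 2 ≤ A v v) →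
      ∀ Δt : ℝ, 0 < Δt → Δt ≤ Δt₀ → ∀ N : ℕ, 1 ≤ N → (N : ℝ) * Δt = T →
      ∀ δ : ℝ, 0 ≤ δ →
      ∀ θ : ℕ → H, θ 0 = 0 →
        (∀ n, 1 ≤ n → n ≤ N → ∀ v : H,
          |⟪θ n - θ (n - 1), v⟫ / Δt + A (θ n) v| ≤
            (c₀ * Δt + σ * K₁ * Δt * ∑ i ∈ Finset.Icc 1 n, norm1 (θ i)
                + c₁ * K₁ * Δt * ∑ i ∈ Finset.Icc 1 n, (δ + ‖θ i‖)) * norm1 v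
              + c₀ * (Δt + δ) * ‖v‖) →
        ∀ n, 1 ≤ n → n ≤ N →
          ‖θ n‖ + ‖θ n - θ (n - 1)‖ + Real.sqrt (ν₀ * Δt) * norm1 (θ n) ≤
            C * (δ + Δt) :=
  L2_error_propagation_general T ν₀ σ K₁ c₀ c₁ hT hν₀
end

section
/- Stability of the fine-grid step of two-grid Algorithm 4.2 (Theorem 4.5, intermediate estimate): There exists a constant C depending only on T, ν₀, μ₀ and K₁ such that the following holds. Let (U_H^n)_{n=0}^N be any sequence in H (the coarse-grid solution) and suppose the fine-grid sequence (U_h^n)_{n=0}^N in H and data f^1,…,f^N ∈ H satisfy, for every 1 ≤ n ≤ N and every v ∈ H, ((U_h^n − U_h^{n−1})/Δt, v) + A(U_h^n, v) + Δt Σ_{i=1}^{n−1} ω_{n,i} B(U_h^i, v) + Δt ω_{n,n} B(U_H^n, v) = (f^n, v). If Δt ≤ min{1/2, 7ν₀²/(8μ₀²K₁²T)}, then for every 1 ≤ n ≤ N: ‖U_h^n‖² + Σ_{i=1}^n ‖U_h^i − U_h^{i−1}‖² + (ν₀Δt/4) Σ_{i=1}^n ‖U_h^i‖₁² ≤ C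 (‖U_h^0‖² + Δt² Σ_{i=1}^n ‖U_H^i‖₁² + Δt Σ_{i=1}^n ‖f^i‖²). -/
open scoped BigOperators RealInnerProductSpace

open Finset Real

/-!
Testing the scheme with `v = U_h^n` turns it into an energy identity for
`‖U^n‖² - ‖U^{n-1}‖² + ‖U^n - U^{n-1}‖²`. Coercivity of `A` yields the `‖U^n‖₁²` term, Young's
inequality absorbs the coarse-grid term, and the memory term is absorbed the same way after
Cauchy–Schwarz over the history and `kΔt ≤ T`, at the price of `Δt` times the energy accumulated so
far. For `Δt ≤ 1/2` the energy therefore grows per step by at most the factor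
`(1 + 2Δt)(1 + 2cΔt)`, `c = K₁²μ₀²T/ν₀²`, plus data terms, and the discrete Gronwall inequality
with `1 + x ≤ eˣ` gives the bound.
-/
lemma two_mul_le_mul_sq_add_sq_div_s9 (x y : ℝ) {c : ℝ} (hc : 0 < c) :
    2 * x * y ≤ c * x ^ 2 + y ^ 2 / c := by
  have h : c * x ^ 2 + y ^ 2 / c - 2 * x * y = (c * x - y) ^ 2 / c := by
    field_simp
    ring
  linarith [div_nonneg (sq_nonneg (c * x - y)) hc.le]

lemma neg_two_mul_le_of_abs_le {t b m x c : ℝ} (ht : 0 ≤ t) (hc : 0 < c) (hb : |b| ≤ m * x) :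
    -(2 * t * b) ≤ c * x ^ 2 + (t * m) ^ 2 / c := by
  have hyoung := two_mul_le_mul_sq_add_sq_div_s9 x (t * m) hc
  have htb : t * -b ≤ t * (m * x) := mul_le_mul_of_nonneg_left ((neg_le_abs b).trans hb) ht
  linarith

lemma abs_sum_mul_le_mul_sum {ι : Type*} (s : Finset ι) {w b a : ι → ℝ} {K : ℝ} (hK : 0 ≤ K)
    (hw : ∀ i ∈ s, |w i| ≤ K) (hb : ∀ i ∈ s, |b i| ≤ a i) :
    |∑ i ∈ s, w i * b i| ≤ K * ∑ i ∈ s, a i := by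
  calc |∑ i ∈ s, w i * b i| ≤ ∑ i ∈ s, |w i * b i| := abs_sum_le_sum_abs _ _
    _ ≤ ∑ i ∈ s, K * a i := sum_le_sum fun i hi => by
        rw [abs_mul]
        exact mul_le_mul (hw i hi) (hb i hi) (abs_nonneg _) hK
    _ = K * ∑ i ∈ s, a i := (mul_sum _ _ _).symm

lemma le_one_add_two_mul_mul_of_one_sub_mul_le {a y x : ℝ} (ha₀ : 0 ≤ a) (ha : a ≤ 1 / 2)
    (hy : 0 ≤ y) (h : (1 - a) * y ≤ x) : y ≤ (1 + 2 * a) * x := by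
  nlinarith [mul_nonneg (mul_nonneg ha₀ (by linarith : 0 ≤ 1 - 2 * a)) hy]

lemma le_pow_mul_add_sum_of_le_mul_add {Y r : ℕ → ℝ} {ρ : ℝ} {N : ℕ} (hρ : 1 ≤ ρ)
    (hr : ∀ i, 0 ≤ r i) (hY : ∀ k, k + 1 ≤ N → Y (k + 1) ≤ ρ * Y k + r (k + 1)) :
    ∀ n ≤ N, Y n ≤ ρ ^ n * (Y 0 + ∑ i ∈ Icc 1 n, r i) := by
  intro n
  induction n with
  | zero => simp
  | succ k ih =>
    intro hk
    have hr_le : r (k + 1) ≤ ρ ^ (k + 1) * r (k + 1) :=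
      le_mul_of_one_le_left (hr _) (one_le_pow₀ hρ)
    calc Y (k + 1) ≤ ρ * Y k + r (k + 1) := hY k hk
      _ ≤ ρ * (ρ ^ k * (Y 0 + ∑ i ∈ Icc 1 k, r i)) + ρ ^ (k + 1) * r (k + 1) := by
          gcongr
          exact ih (by omega)
      _ = ρ ^ (k + 1) * (Y 0 + ∑ i ∈ Icc 1 (k + 1), r i) := by
          rw [sum_Icc_succ_top (by omega), pow_succ']
          ring

lemma one_add_mul_mul_one_add_mul_pow_le_exp {a b t T : ℝ} {n : ℕ} (ha : 0 ≤ a) (hb : 0 ≤ b)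
    (ht : 0 ≤ t) (hnT : n * t ≤ T) : ((1 + a * t) * (1 + b * t)) ^ n ≤ exp ((a + b) * T) := by
  have hρ : (1 + a * t) * (1 + b * t) ≤ exp ((a + b) * t) := by
    rw [add_mul a b t, exp_add]
    gcongr
    · linarith [add_one_le_exp (a * t)]
    · linarith [add_one_le_exp (b * t)]
  calc ((1 + a * t) * (1 + b * t)) ^ n ≤ exp ((a + b) * t) ^ n := by gcongr
    _ = exp (n * ((a + b) * t)) := (exp_nat_mul _ n).symm
    _ ≤ exp ((a + b) * T) := exp_le_exp.mpr <| by
        nlinarith [mul_le_mul_of_nonneg_left hnT (add_nonneg ha hb)]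

lemma two_mul_inner_sub_self_s9 {E : Type*} [NormedAddCommGroup E] [InnerProductSpace ℝ E]
    (u p : E) : 2 * ⟪u - p, u⟫ = ‖u‖ ^ 2 - ‖p‖ ^ 2 + ‖u - p‖ ^ 2 := by
  rw [norm_sub_sq_real, inner_sub_left, real_inner_self_eq_norm_sq, real_inner_comm]
  ring

section SchemeTerms

variable {H : Type*} {norm1 : H → ℝ} {B : H → H → ℝ} {Δt ν₀ μ₀ K₁ T : ℝ}

lemma neg_memory_term_le {k : ℕ} {w : ℕ → ℝ} {x : ℕ → H} {u : H}
    (hw : ∀ i ∈ Icc 1 k, |w i| ≤ K₁) (hB : ∀ u v, |B u v| ≤ μ₀ * norm1 u * norm1 v)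
    (hK₁ : 0 ≤ K₁) (hν₀ : 0 < ν₀) (hΔt : 0 < Δt) (hkT : k * Δt ≤ T) :
    -(2 * Δt ^ 2 * ∑ i ∈ Icc 1 k, w i * B (x i) u)
      ≤ ν₀ * Δt * norm1 u ^ 2
        + K₁ ^ 2 * μ₀ ^ 2 / ν₀ * T * Δt ^ 2 * ∑ i ∈ Icc 1 k, norm1 (x i) ^ 2 := by
  set S := ∑ i ∈ Icc 1 k, norm1 (x i)
  set E := ∑ i ∈ Icc 1 k, norm1 (x i) ^ 2
  have habs : |∑ i ∈ Icc 1 k, w i * B (x i) u| ≤ K₁ * μ₀ * S * norm1 u :=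
    calc |∑ i ∈ Icc 1 k, w i * B (x i) u|
        ≤ K₁ * ∑ i ∈ Icc 1 k, μ₀ * norm1 (x i) * norm1 u :=
          abs_sum_mul_le_mul_sum _ hK₁ hw fun _ _ => hB _ _
      _ = K₁ * μ₀ * S * norm1 u := by rw [← sum_mul, ← mul_sum]; ring
  have hS : S ^ 2 ≤ k * E := by
    simpa using sq_sum_le_card_mul_sum_sq (s := Icc 1 k) (f := fun i => norm1 (x i))
  have hE : 0 ≤ E := sum_nonneg fun _ _ => sq_nonneg _
  have hyoung := neg_two_mul_le_of_abs_le (sq_nonneg Δt) (by positivity : 0 < ν₀ * Δt) habs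
  have hsum : (Δt ^ 2 * (K₁ * μ₀ * S)) ^ 2 / (ν₀ * Δt)
      ≤ K₁ ^ 2 * μ₀ ^ 2 / ν₀ * T * Δt ^ 2 * E :=
    calc (Δt ^ 2 * (K₁ * μ₀ * S)) ^ 2 / (ν₀ * Δt)
        = K₁ ^ 2 * μ₀ ^ 2 / ν₀ * Δt ^ 3 * S ^ 2 := by field_simp
      _ ≤ K₁ ^ 2 * μ₀ ^ 2 / ν₀ * Δt ^ 3 * (k * E) := by gcongr
      _ = K₁ ^ 2 * μ₀ ^ 2 / ν₀ * Δt ^ 2 * E * (k * Δt) := by ring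
      _ ≤ K₁ ^ 2 * μ₀ ^ 2 / ν₀ * Δt ^ 2 * E * T := by gcongr
      _ = K₁ ^ 2 * μ₀ ^ 2 / ν₀ * T * Δt ^ 2 * E := by ring
  linarith

lemma neg_coarse_term_le {w : ℝ} {v u : H} (hw : |w| ≤ K₁)
    (hB : ∀ u v, |B u v| ≤ μ₀ * norm1 u * norm1 v) (hK₁ : 0 ≤ K₁) (hν₀ : 0 < ν₀)
    (hΔt : 0 < Δt) (hΔt₂ : Δt ≤ 1 / 2) :
    -(2 * Δt ^ 2 * w * B v u)
      ≤ ν₀ * Δt / 2 * norm1 u ^ 2 + K₁ ^ 2 * μ₀ ^ 2 / ν₀ * Δt ^ 2 * norm1 v ^ 2 := by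
  have habs : |w * B v u| ≤ K₁ * μ₀ * norm1 v * norm1 u := by
    rw [abs_mul]
    nlinarith [mul_le_mul hw (hB v u) (abs_nonneg _) hK₁]
  have hyoung := neg_two_mul_le_of_abs_le (sq_nonneg Δt) (by positivity : 0 < ν₀ * Δt / 2) habs
  have hterm : (Δt ^ 2 * (K₁ * μ₀ * norm1 v)) ^ 2 / (ν₀ * Δt / 2)
      ≤ K₁ ^ 2 * μ₀ ^ 2 / ν₀ * Δt ^ 2 * norm1 v ^ 2 :=
    calc (Δt ^ 2 * (K₁ * μ₀ * norm1 v)) ^ 2 / (ν₀ * Δt / 2)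
        = K₁ ^ 2 * μ₀ ^ 2 / ν₀ * Δt ^ 2 * norm1 v ^ 2 * (2 * Δt) := by field_simp
      _ ≤ K₁ ^ 2 * μ₀ ^ 2 / ν₀ * Δt ^ 2 * norm1 v ^ 2 := by
        apply mul_le_of_le_one_right (by positivity)
        linarith
  linarith [mul_assoc (2 * Δt ^ 2) w (B v u)]

end SchemeTerms

noncomputable section

variable {H : Type*} [NormedAddCommGroup H]

def fineEnergy (norm1 : H → ℝ) (ν₀ Δt : ℝ) (U : ℕ → H) (n : ℕ) : ℝ :=
  ‖U n‖ ^ 2 + ∑ i ∈ Icc 1 n, ‖U i - U (i - 1)‖ ^ 2 + ν₀ * Δt / 2 * ∑ i ∈ Icc 1 n, norm1 (U i) ^ 2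

section Energy

variable {norm1 : H → ℝ} {ν₀ Δt : ℝ}

@[simp]
lemma fineEnergy_zero (U : ℕ → H) : fineEnergy norm1 ν₀ Δt U 0 = ‖U 0‖ ^ 2 := by
  simp [fineEnergy]

lemma fineEnergy_succ (U : ℕ → H) (k : ℕ) :
    fineEnergy norm1 ν₀ Δt U (k + 1) = fineEnergy norm1 ν₀ Δt U k
      + (‖U (k + 1)‖ ^ 2 - ‖U k‖ ^ 2) + ‖U (k + 1) - U k‖ ^ 2
      + ν₀ * Δt / 2 * norm1 (U (k + 1)) ^ 2 := by
  simp only [fineEnergy, sum_Icc_succ_top (Nat.le_add_left 1 k), Nat.add_sub_cancel]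
  ring

lemma sq_norm_add_weighted_le_fineEnergy (U : ℕ → H) (n : ℕ) :
    ‖U n‖ ^ 2 + ν₀ * Δt / 2 * ∑ i ∈ Icc 1 n, norm1 (U i) ^ 2 ≤ fineEnergy norm1 ν₀ Δt U n := by
  have : 0 ≤ ∑ i ∈ Icc 1 n, ‖U i - U (i - 1)‖ ^ 2 := sum_nonneg fun _ _ => sq_nonneg _
  unfold fineEnergy
  linarith

end Energy

variable [InnerProductSpace ℝ H]

def IsFineGridSolution (A : H →ₗ[ℝ] H →ₗ[ℝ] ℝ) (B : H → H → ℝ) (ω : ℕ → ℕ → ℝ) (Δt : ℝ)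
    (N : ℕ) (UH Uh f : ℕ → H) : Prop :=
  ∀ n, 1 ≤ n → n ≤ N → ∀ v : H,
    ⟪Uh n - Uh (n - 1), v⟫ / Δt + A (Uh n) v
      + Δt * ∑ i ∈ Icc 1 (n - 1), ω n i * B (Uh i) v
      + Δt * ω n n * B (UH n) v = ⟪f n, v⟫

namespace IsFineGridSolution

variable {norm1 : H → ℝ} {A : H →ₗ[ℝ] H →ₗ[ℝ] ℝ} {B : H → H → ℝ} {ω : ℕ → ℕ → ℝ}
  {UH Uh f : ℕ → H} {N : ℕ} {Δt ν₀ μ₀ K₁ T : ℝ}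

lemma energy_eq (hsol : IsFineGridSolution A B ω Δt N UH Uh f) (hΔt : 0 < Δt) {k : ℕ}
    (hk : k + 1 ≤ N) :
    ‖Uh (k + 1)‖ ^ 2 - ‖Uh k‖ ^ 2 + ‖Uh (k + 1) - Uh k‖ ^ 2
      = 2 * Δt * ⟪f (k + 1), Uh (k + 1)⟫ - 2 * Δt * A (Uh (k + 1)) (Uh (k + 1))
        - 2 * Δt ^ 2 * ∑ i ∈ Icc 1 k, ω (k + 1) i * B (Uh i) (Uh (k + 1))
        - 2 * Δt ^ 2 * ω (k + 1) (k + 1) * B (UH (k + 1)) (Uh (k + 1)) := by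
  have h := hsol (k + 1) (Nat.le_add_left 1 k) hk (Uh (k + 1))
  rw [Nat.add_sub_cancel] at h
  rw [← two_mul_inner_sub_self_s9]
  have := hΔt.ne'
  field_simp at h
  linear_combination 2 * h

lemma sq_norm_step_le (hsol : IsFineGridSolution A B ω Δt N UH Uh f)
    (hA : ∀ v, ν₀ * norm1 v ^ 2 ≤ A v v) (hω : ∀ n i, 1 ≤ i → i ≤ n → n ≤ N → |ω n i| ≤ K₁)
    (hB : ∀ u v, |B u v| ≤ μ₀ * norm1 u * norm1 v) (hK₁ : 0 ≤ K₁) (hν₀ : 0 < ν₀)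
    (hΔt : 0 < Δt) (hΔt₂ : Δt ≤ 1 / 2) {k : ℕ} (hk : k + 1 ≤ N) (hkT : k * Δt ≤ T) :
    ‖Uh (k + 1)‖ ^ 2 - ‖Uh k‖ ^ 2 + ‖Uh (k + 1) - Uh k‖ ^ 2
        + ν₀ * Δt / 2 * norm1 (Uh (k + 1)) ^ 2
      ≤ Δt * ‖Uh (k + 1)‖ ^ 2 + Δt * ‖f (k + 1)‖ ^ 2
        + K₁ ^ 2 * μ₀ ^ 2 / ν₀ * Δt ^ 2 * norm1 (UH (k + 1)) ^ 2
        + K₁ ^ 2 * μ₀ ^ 2 / ν₀ * T * Δt ^ 2 * ∑ i ∈ Icc 1 k, norm1 (Uh i) ^ 2 := by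
  have hdata :
      2 * Δt * ⟪f (k + 1), Uh (k + 1)⟫ ≤ Δt * ‖f (k + 1)‖ ^ 2 + Δt * ‖Uh (k + 1)‖ ^ 2 := by
    have hcs := real_inner_le_norm (f (k + 1)) (Uh (k + 1))
    have hsq := two_mul_le_add_sq ‖f (k + 1)‖ ‖Uh (k + 1)‖
    have := mul_le_mul_of_nonneg_left (by linarith : 2 * ⟪f (k + 1), Uh (k + 1)⟫
      ≤ ‖f (k + 1)‖ ^ 2 + ‖Uh (k + 1)‖ ^ 2) hΔt.le
    linarith
  have hcoer := mul_le_mul_of_nonneg_left (hA (Uh (k + 1))) (by positivity : 0 ≤ 2 * Δt)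
  have hmemory := neg_memory_term_le (x := Uh) (u := Uh (k + 1))
    (fun i hi => hω (k + 1) i (mem_Icc.mp hi).1 (by grind) hk) hB hK₁ hν₀ hΔt hkT
  have hcoarse := neg_coarse_term_le (v := UH (k + 1)) (u := Uh (k + 1))
    (hω (k + 1) (k + 1) (Nat.le_add_left 1 k) le_rfl hk) hB hK₁ hν₀ hΔt hΔt₂
  linarith [hsol.energy_eq hΔt hk]

lemma fineEnergy_succ_le (hsol : IsFineGridSolution A B ω Δt N UH Uh f)
    (hA : ∀ v, ν₀ * norm1 v ^ 2 ≤ A v v) (hω : ∀ n i, 1 ≤ i → i ≤ n → n ≤ N → |ω n i| ≤ K₁)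
    (hB : ∀ u v, |B u v| ≤ μ₀ * norm1 u * norm1 v) (hK₁ : 0 ≤ K₁) (hν₀ : 0 < ν₀) (hT : 0 ≤ T)
    (hΔt : 0 < Δt) (hΔt₂ : Δt ≤ 1 / 2) {k : ℕ} (hk : k + 1 ≤ N) (hkT : k * Δt ≤ T) :
    fineEnergy norm1 ν₀ Δt Uh (k + 1)
      ≤ (1 + 2 * Δt) * (1 + 2 * (K₁ ^ 2 * μ₀ ^ 2 * T / ν₀ ^ 2) * Δt)
          * fineEnergy norm1 ν₀ Δt Uh k
        + (2 * Δt * ‖f (k + 1)‖ ^ 2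
          + 2 * (K₁ ^ 2 * μ₀ ^ 2 / ν₀) * Δt ^ 2 * norm1 (UH (k + 1)) ^ 2) := by
  set c := K₁ ^ 2 * μ₀ ^ 2 * T / ν₀ ^ 2
  set E := ∑ i ∈ Icc 1 k, norm1 (Uh i) ^ 2
  set r := 2 * Δt * ‖f (k + 1)‖ ^ 2 + 2 * (K₁ ^ 2 * μ₀ ^ 2 / ν₀) * Δt ^ 2 * norm1 (UH (k + 1)) ^ 2
  have hr : 0 ≤ r := by positivity
  have hstep := hsol.sq_norm_step_le hA hω hB hK₁ hν₀ hΔt hΔt₂ hk hkT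
  have hsucc := fineEnergy_succ (norm1 := norm1) (ν₀ := ν₀) (Δt := Δt) Uh k
  have hY₀ := sq_norm_add_weighted_le_fineEnergy (norm1 := norm1) (ν₀ := ν₀) (Δt := Δt) Uh k
  have hY₁ :=
    sq_norm_add_weighted_le_fineEnergy (norm1 := norm1) (ν₀ := ν₀) (Δt := Δt) Uh (k + 1)
  have hE₁ : 0 ≤ ν₀ * Δt / 2 * ∑ i ∈ Icc 1 (k + 1), norm1 (Uh i) ^ 2 := by positivity
  have hmemory : K₁ ^ 2 * μ₀ ^ 2 / ν₀ * T * Δt ^ 2 * E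
      ≤ 2 * c * Δt * fineEnergy norm1 ν₀ Δt Uh k := by
    have hE : ν₀ * Δt / 2 * E ≤ fineEnergy norm1 ν₀ Δt Uh k := by linarith [sq_nonneg ‖Uh k‖]
    calc K₁ ^ 2 * μ₀ ^ 2 / ν₀ * T * Δt ^ 2 * E = 2 * c * Δt * (ν₀ * Δt / 2 * E) := by
          simp only [c]; field_simp
      _ ≤ 2 * c * Δt * fineEnergy norm1 ν₀ Δt Uh k := by gcongr
  have hnorm : Δt * ‖Uh (k + 1)‖ ^ 2 ≤ Δt * fineEnergy norm1 ν₀ Δt Uh (k + 1) := by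
    gcongr; linarith
  have hone_sub : (1 - Δt) * fineEnergy norm1 ν₀ Δt Uh (k + 1)
      ≤ (1 + 2 * c * Δt) * fineEnergy norm1 ν₀ Δt Uh k + r / 2 := by
    linarith
  calc fineEnergy norm1 ν₀ Δt Uh (k + 1)
      ≤ (1 + 2 * Δt) * ((1 + 2 * c * Δt) * fineEnergy norm1 ν₀ Δt Uh k + r / 2) :=
        le_one_add_two_mul_mul_of_one_sub_mul_le hΔt.le hΔt₂
          (by linarith [sq_nonneg ‖Uh (k + 1)‖]) hone_sub
    _ ≤ (1 + 2 * Δt) * (1 + 2 * c * Δt) * fineEnergy norm1 ν₀ Δt Uh k + r := by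
        linarith [mul_le_mul_of_nonneg_right hΔt₂ hr]

end IsFineGridSolution

end

theorem two_grid_alg42_stability_general
    (T ν₀ μ₀ K₁ : ℝ) (hT : 0 < T) (hν₀ : 0 < ν₀) (hK₁ : 0 < K₁) :
    ∃ C : ℝ, 0 < C ∧
      ∀ (H : Type) [NormedAddCommGroup H] [InnerProductSpace ℝ H]
        (norm1 : H → ℝ), (∀ x, 0 ≤ norm1 x) →
      ∀ A : H →ₗ[ℝ] H →ₗ[ℝ] ℝ, (∀ v, ν₀ * (norm1 v) ^ 2 ≤ A v v) →
      ∀ Δt : ℝ, 0 < Δt → ∀ N : ℕ, 1 ≤ N → (N : ℝ) * Δt = T →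
      ∀ ω : ℕ → ℕ → ℝ, (∀ n i, 1 ≤ i → i ≤ n → n ≤ N → |ω n i| ≤ K₁) →
      ∀ B : H → H → ℝ, (∀ u v, |B u v| ≤ μ₀ * norm1 u * norm1 v) →
      ∀ UH Uh f : ℕ → H,
        (∀ n, 1 ≤ n → n ≤ N → ∀ v : H,
          ⟪Uh n - Uh (n - 1), v⟫ / Δt + A (Uh n) v
            + Δt * ∑ i ∈ Finset.Icc 1 (n - 1), ω n i * B (Uh i) v
            + Δt * ω n n * B (UH n) v = ⟪f n, v⟫) →
        Δt ≤ min (1 / 2) (7 * ν₀ ^ 2 / (8 * μ₀ ^ 2 * K₁ ^ 2 * T)) →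
        ∀ n, 1 ≤ n → n ≤ N →
          ‖Uh n‖ ^ 2 + ∑ i ∈ Finset.Icc 1 n, ‖Uh i - Uh (i - 1)‖ ^ 2
              + (ν₀ * Δt / 4) * ∑ i ∈ Finset.Icc 1 n, (norm1 (Uh i)) ^ 2
            ≤ C * (‖Uh 0‖ ^ 2
                + Δt ^ 2 * ∑ i ∈ Finset.Icc 1 n, (norm1 (UH i)) ^ 2
                + Δt * ∑ i ∈ Finset.Icc 1 n, ‖f i‖ ^ 2) := by
  set κ := K₁ ^ 2 * μ₀ ^ 2 / ν₀
  set c := K₁ ^ 2 * μ₀ ^ 2 * T / ν₀ ^ 2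
  refine ⟨(2 + 2 * κ) * exp ((2 + 2 * c) * T), by positivity, ?_⟩
  intro H _ _ norm1 _ A hA Δt hΔt N _ hNT ω hω B hB UH Uh f hsol hΔt_le n _ hnN
  have hΔt₂ : Δt ≤ 1 / 2 := (le_min_iff.mp hΔt_le).1
  have hkT : ∀ k ≤ N, (k : ℝ) * Δt ≤ T := fun k hk => hNT ▸ by gcongr
  have hρ : 1 ≤ (1 + 2 * Δt) * (1 + 2 * c * Δt) :=
    one_le_mul_of_one_le_of_one_le (by linarith) (le_add_of_nonneg_right (by positivity))
  have hgronwall := le_pow_mul_add_sum_of_le_mul_add (Y := fineEnergy norm1 ν₀ Δt Uh)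
    (r := fun i => 2 * Δt * ‖f i‖ ^ 2 + 2 * κ * Δt ^ 2 * norm1 (UH i) ^ 2) hρ
    (fun i => by positivity)
    (fun k hk => IsFineGridSolution.fineEnergy_succ_le hsol hA hω hB hK₁.le hν₀ hT.le hΔt hΔt₂ hk
      (hkT k (by omega))) n hnN
  have hexp := one_add_mul_mul_one_add_mul_pow_le_exp (a := 2) (b := 2 * c) (n := n)
    zero_le_two (by positivity) hΔt.le (hkT n hnN)
  have hdata :
      ‖Uh 0‖ ^ 2 + ∑ i ∈ Icc 1 n, (2 * Δt * ‖f i‖ ^ 2 + 2 * κ * Δt ^ 2 * norm1 (UH i) ^ 2)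
      ≤ (2 + 2 * κ) * (‖Uh 0‖ ^ 2 + Δt ^ 2 * ∑ i ∈ Icc 1 n, norm1 (UH i) ^ 2
        + Δt * ∑ i ∈ Icc 1 n, ‖f i‖ ^ 2) := by
    rw [sum_add_distrib, ← mul_sum, ← mul_sum]
    have hκ : 0 ≤ κ := by positivity
    have hF : 0 ≤ Δt * ∑ i ∈ Icc 1 n, ‖f i‖ ^ 2 := by positivity
    have hG : 0 ≤ Δt ^ 2 * ∑ i ∈ Icc 1 n, norm1 (UH i) ^ 2 := by positivity
    nlinarith [mul_nonneg hκ (sq_nonneg ‖Uh 0‖), mul_nonneg hκ hF]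
  calc _ ≤ fineEnergy norm1 ν₀ Δt Uh n := by
        unfold fineEnergy
        gcongr
        linarith [mul_pos hν₀ hΔt]
    _ ≤ ((1 + 2 * Δt) * (1 + 2 * c * Δt)) ^ n * (‖Uh 0‖ ^ 2
          + ∑ i ∈ Icc 1 n, (2 * Δt * ‖f i‖ ^ 2 + 2 * κ * Δt ^ 2 * norm1 (UH i) ^ 2)) := by
        simpa using hgronwall
    _ ≤ exp ((2 + 2 * c) * T) * ((2 + 2 * κ) * (‖Uh 0‖ ^ 2
          + Δt ^ 2 * ∑ i ∈ Icc 1 n, norm1 (UH i) ^ 2 + Δt * ∑ i ∈ Icc 1 n, ‖f i‖ ^ 2)) := by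
        gcongr
    _ = _ := by ring

/-- Stability of the fine-grid step of two-grid Algorithm 4.2
(Theorem 4.5, intermediate estimate). -/
theorem two_grid_alg42_stability
    (T ν₀ μ₀ K₁ : ℝ) (hT : 0 < T) (hν₀ : 0 < ν₀) (hμ₀ : 0 < μ₀) (hK₁ : 0 < K₁) :
    ∃ C : ℝ, 0 < C ∧
      ∀ (H : Type) [NormedAddCommGroup H] [InnerProductSpace ℝ H]
        (norm1 : H → ℝ), (∀ x, 0 ≤ norm1 x) →
      ∀ A : H →ₗ[ℝ] H →ₗ[ℝ] ℝ, (∀ v, ν₀ * (norm1 v) ^ 2 ≤ A v v) →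
      ∀ Δt : ℝ, 0 < Δt → ∀ N : ℕ, 1 ≤ N → (N : ℝ) * Δt = T →
      ∀ ω : ℕ → ℕ → ℝ, (∀ n i, 1 ≤ i → i ≤ n → n ≤ N → |ω n i| ≤ K₁) →
      ∀ B : H → H → ℝ, (∀ u v, |B u v| ≤ μ₀ * norm1 u * norm1 v) →
      ∀ UH Uh f : ℕ → H,
        (∀ n, 1 ≤ n → n ≤ N → ∀ v : H,
          ⟪Uh n - Uh (n - 1), v⟫ / Δt + A (Uh n) v
            + Δt * ∑ i ∈ Finset.Icc 1 (n - 1), ω n i * B (Uh i) v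
            + Δt * ω n n * B (UH n) v = ⟪f n, v⟫) →
        Δt ≤ min (1 / 2) (7 * ν₀ ^ 2 / (8 * μ₀ ^ 2 * K₁ ^ 2 * T)) →
        ∀ n, 1 ≤ n → n ≤ N →
          ‖Uh n‖ ^ 2 + ∑ i ∈ Finset.Icc 1 n, ‖Uh i - Uh (i - 1)‖ ^ 2
              + (ν₀ * Δt / 4) * ∑ i ∈ Finset.Icc 1 n, (norm1 (Uh i)) ^ 2
            ≤ C * (‖Uh 0‖ ^ 2
                + Δt ^ 2 * ∑ i ∈ Finset.Icc 1 n, (norm1 (UH i)) ^ 2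
                + Δt * ∑ i ∈ Finset.Icc 1 n, ‖f i‖ ^ 2) :=
  two_grid_alg42_stability_general T ν₀ μ₀ K₁ hT hν₀ hK₁
end
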